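/- If A is a q-ary (m,n,k) MRD code (a set of q^{nk} matrices in F_q^{m×n} with minimum rank distance n−k+1), then its lift λ(A) = {rowspace(I_m | A) : A ∈ A} is a (m+n, q^{nk}, 2(n−k+1); m) constant-dimension subspace code in F_q^{m+n}. -/

import Mathlib

/-!
A vector `(v, w)` lies in the lift of `A` iff `w = v A`, so the lift of `A` is the graph of
`v ↦ v A`: it has dimension `m`, determines `A`, and its intersection with the lift of `B` is the
graph of `v ↦ v A` restricted to the left kernel of `A - B`, of dimension `m - rank (A - B)`.
Hence `dim (λ A ⊔ λ B) - dim (λ A ⊓ λ B) = 2 rank (A - B)`, and the lifting map turns the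
minimum rank distance `n - k + 1` into subspace distance `2 (n - k + 1)`.
-/

/-- The lifting map: `A ∈ F^{m×n}` is sent to the row space of `(I_m | A) ⊆ F^{m+n}`. -/
noncomputable def liftMatrix {F : Type*} [Field F] {m n : ℕ} (A : Matrix (Fin m) (Fin n) F) :
    Submodule F (Fin m ⊕ Fin n → F) :=
  LinearMap.range (Matrix.vecMulLinear (Matrix.fromCols (1 : Matrix (Fin m) (Fin m) F) A))

open Matrix

section Lift

variable {F : Type*} [Field F] {m n : ℕ}

lemma vecMul_fromCols_one (A : Matrix (Fin m) (Fin n) F) (v : Fin m → F) :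
    v ᵥ* fromCols (1 : Matrix (Fin m) (Fin m) F) A = Sum.elim v (v ᵥ* A) := by
  rw [vecMul_fromCols, vecMul_one]

lemma vecMulLinear_fromCols_one_injective (A : Matrix (Fin m) (Fin n) F) :
    Function.Injective (vecMulLinear (fromCols (1 : Matrix (Fin m) (Fin m) F) A)) :=
  fun v w hvw => by simpa [vecMul_fromCols_one] using congrArg (· ∘ Sum.inl) hvw

lemma sumElim_mem_liftMatrix_iff {A : Matrix (Fin m) (Fin n) F} {v : Fin m → F}
    {w : Fin n → F} : Sum.elim v w ∈ liftMatrix A ↔ w = v ᵥ* A := by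
  simp only [liftMatrix, LinearMap.mem_range, vecMulLinear_apply, vecMul_fromCols_one,
    Sum.elim_eq_iff]
  constructor
  · rintro ⟨u, rfl, rfl⟩
    rfl
  · rintro rfl
    exact ⟨v, rfl, rfl⟩

lemma finrank_liftMatrix (A : Matrix (Fin m) (Fin n) F) : Module.finrank F (liftMatrix A) = m := by
  rw [liftMatrix, LinearMap.finrank_range_of_inj (vecMulLinear_fromCols_one_injective A),
    Module.finrank_fin_fun]

lemma liftMatrix_injective : Function.Injective (liftMatrix (F := F) (m := m) (n := n)) := by
  intro A B hAB
  refine ext_iff_vecMul.2 fun v => ?_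
  have hA : Sum.elim v (v ᵥ* A) ∈ liftMatrix B := hAB ▸ sumElim_mem_liftMatrix_iff.2 rfl
  exact sumElim_mem_liftMatrix_iff.1 hA

lemma liftMatrix_inf_liftMatrix (A B : Matrix (Fin m) (Fin n) F) :
    liftMatrix A ⊓ liftMatrix B = (LinearMap.ker (vecMulLinear (A - B))).map
      (vecMulLinear (fromCols (1 : Matrix (Fin m) (Fin m) F) A)) := by
  ext x
  simp only [Submodule.mem_inf, Submodule.mem_map, LinearMap.mem_ker,
    vecMulLinear_apply, vecMul_fromCols_one, vecMul_sub, sub_eq_zero]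
  constructor
  · rintro ⟨⟨v, rfl⟩, hB⟩
    rw [vecMulLinear_apply, vecMul_fromCols_one, sumElim_mem_liftMatrix_iff] at hB
    exact ⟨v, hB, by rw [vecMulLinear_apply, vecMul_fromCols_one]⟩
  · rintro ⟨v, hv, rfl⟩
    exact ⟨sumElim_mem_liftMatrix_iff.2 rfl, sumElim_mem_liftMatrix_iff.2 hv⟩

lemma finrank_ker_vecMulLinear_add_rank {ι κ : Type*} [Fintype ι] [Fintype κ]
    (M : Matrix ι κ F) :
    Module.finrank F (LinearMap.ker (vecMulLinear M)) + M.rank = Fintype.card ι := by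
  have hrank : Module.finrank F (LinearMap.range (vecMulLinear M)) = M.rank := by
    rw [← mulVecLin_transpose, ← rank, rank_transpose]
  rw [← hrank, add_comm, LinearMap.finrank_range_add_finrank_ker,
    Module.finrank_fintype_fun_eq_card]

theorem finrank_liftMatrix_sup_sub_finrank_inf (A B : Matrix (Fin m) (Fin n) F) :
    Module.finrank F ↥(liftMatrix A ⊔ liftMatrix B) -
      Module.finrank F ↥(liftMatrix A ⊓ liftMatrix B) = 2 * (A - B).rank := by
  have hinf : Module.finrank F ↥(liftMatrix A ⊓ liftMatrix B) + (A - B).rank = m := by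
    rw [liftMatrix_inf_liftMatrix, ← (Submodule.equivMapOfInjective _
      (vecMulLinear_fromCols_one_injective A) _).finrank_eq, finrank_ker_vecMulLinear_add_rank,
      Fintype.card_fin]
  have hsup := Submodule.finrank_sup_add_finrank_inf_eq (liftMatrix A) (liftMatrix B)
  rw [finrank_liftMatrix, finrank_liftMatrix] at hsup
  omega

end Lift

theorem lifted_MRD_is_subspace_code_general (F : Type*) [Field F] [Fintype F] (m n k : ℕ)
    (A : Set (Matrix (Fin m) (Fin n) F))
    (hcard : A.ncard = (Fintype.card F) ^ (n * k))
    (hd : ∀ X ∈ A, ∀ Y ∈ A, X ≠ Y → n - k + 1 ≤ (X - Y).rank) :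
    (liftMatrix '' A).ncard = (Fintype.card F) ^ (n * k) ∧
      (∀ U ∈ liftMatrix '' A, Module.finrank F ↥U = m) ∧
      ∀ U ∈ liftMatrix '' A, ∀ V ∈ liftMatrix '' A, U ≠ V →
        2 * (n - k + 1) ≤ Module.finrank F ↥(U ⊔ V) - Module.finrank F ↥(U ⊓ V) := by
  refine ⟨?_, ?_, ?_⟩
  · rw [Set.ncard_image_of_injective _ liftMatrix_injective, hcard]
  · rintro _ ⟨X, -, rfl⟩
    exact finrank_liftMatrix X
  · rintro _ ⟨X, hX, rfl⟩ _ ⟨Y, hY, rfl⟩ hXY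
    rw [finrank_liftMatrix_sup_sub_finrank_inf]
    exact Nat.mul_le_mul_left 2 (hd X hX Y hY (ne_of_apply_ne liftMatrix hXY))

/-- Lifting an `(m,n,k)` MRD code over `F_q` yields an
`(m+n, q^{nk}, 2(n-k+1); m)` constant-dimension subspace code. -/
theorem lifted_MRD_is_subspace_code (F : Type*) [Field F] [Fintype F] (m n k : ℕ)
    (hkm : k ≤ m) (hmn : m ≤ n) (A : Set (Matrix (Fin m) (Fin n) F))
    (hcard : A.ncard = (Fintype.card F) ^ (n * k))
    (hd : ∀ X ∈ A, ∀ Y ∈ A, X ≠ Y → n - k + 1 ≤ (X - Y).rank) :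
    (liftMatrix '' A).ncard = (Fintype.card F) ^ (n * k) ∧
      (∀ U ∈ liftMatrix '' A, Module.finrank F ↥U = m) ∧
      ∀ U ∈ liftMatrix '' A, ∀ V ∈ liftMatrix '' A, U ≠ V →
        2 * (n - k + 1) ≤ Module.finrank F ↥(U ⊔ V) - Module.finrank F ↥(U ⊓ V) :=
  lifted_MRD_is_subspace_code_general F m n k A hcard hd
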